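/- Fix real numbers M and a with 0 < |a| < M, set Δ(r) = r² − 2Mr + a², r₊ = M + √(M² − a²), r₋ = M − √(M² − a²), μ(r) = Δ(r)/(r² + a²), and let ρ : ℝ → (r₋, r₊) be the inverse of the map r ↦ 2∫_M^r (s² + a²)/Δ(s) ds. Let x₀ ∈ ℝ, E ≥ 0, and let F : (−∞, x₀] → ℝ be differentiable with ∫_{−∞}^{x₀} (−μ(ρ(t)))^{−1}·F'(t)² dt ≤ E². Then the limit L := lim_{t → −∞} F(t) exists, and for every x ≤ x₀ one has |F(x) − L| ≤ (2(r₊ − ρ(x)))^{1/2} · E. -/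

import Mathlib

/-!
Differentiating `2 r*(ρ t) = t` gives `ρ' = μ(ρ)/2`, so `−μ∘ρ` is the derivative of `−2ρ`, and as
`ρ → r₊` at `−∞` this yields `∫_{−∞}^x (−μ∘ρ) = 2(r₊ − ρ x)`. Cauchy–Schwarz against the weight
`−μ∘ρ` then bounds `∫_{−∞}^x |F'|` by `√(2(r₊ − ρ x)) · E`. In particular `F'` is integrable on
`(−∞, x₀]`, so `F` has a limit `L` at `−∞` and `F x − L = ∫_{−∞}^x F'`.
-/

open MeasureTheory

noncomputable def KerrDelta (M a r : ℝ) : ℝ := r ^ 2 - 2 * M * r + a ^ 2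

noncomputable def rPlus (M a : ℝ) : ℝ := M + Real.sqrt (M ^ 2 - a ^ 2)

noncomputable def rMinus (M a : ℝ) : ℝ := M - Real.sqrt (M ^ 2 - a ^ 2)

noncomputable def kerrMu (M a r : ℝ) : ℝ := KerrDelta M a r / (r ^ 2 + a ^ 2)

/-- The tortoise coordinate `r*`, normalized by `r*(M) = 0`. -/
noncomputable def rStar (M a r : ℝ) : ℝ := ∫ s in M..r, (s ^ 2 + a ^ 2) / KerrDelta M a s

open Set Filter Topology Function

theorem Set.InjOn.range_eq_of_rightInverse {α β : Type*} {T : α → β} {ρ : β → α} {s : Set α}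
    (hT : InjOn T s) (hρ : ∀ x, ρ x ∈ s) (h : RightInverse ρ T) : range ρ = s :=
  (range_subset_iff.2 hρ).antisymm fun r hr => ⟨T r, hT (hρ (T r)) hr (h (T r))⟩

section Monotone

variable {α β : Type*} [LinearOrder α] [LinearOrder β]

theorem StrictAntiOn.antitone_of_rightInverse {T : α → β} {ρ : β → α} {s : Set α}
    (hT : StrictAntiOn T s) (hρ : ∀ x, ρ x ∈ s) (h : RightInverse ρ T) : Antitone ρ := by
  intro x y hxy
  by_contra! hlt
  have := hT (hρ x) (hρ y) hlt
  rw [h x, h y] at this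
  exact this.not_ge hxy

variable [TopologicalSpace α] [OrderTopology α] [TopologicalSpace β] [OrderTopology β]
  [DenselyOrdered β]

theorem Monotone.continuous_of_isOpen_range {f : α → β} (hf : Monotone f)
    (h : IsOpen (range f)) : Continuous f :=
  continuous_iff_continuousAt.2 fun x =>
    continuousAt_of_monotoneOn_of_image_mem_nhds (hf.monotoneOn univ) univ_mem
      (by rw [image_univ]; exact h.mem_nhds (mem_range_self x))

theorem Antitone.continuous_of_isOpen_range {f : α → β} (hf : Antitone f)
    (h : IsOpen (range f)) : Continuous f :=
  Monotone.continuous_of_isOpen_range (β := βᵒᵈ) hf h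

end Monotone

section Improper

theorem integrableOn_Iic_deriv_of_nonneg {g g' : ℝ → ℝ} {b l : ℝ}
    (hderiv : ∀ x ∈ Iic b, HasDerivAt g (g' x) x) (g'pos : ∀ x ∈ Iic b, 0 ≤ g' x)
    (hg : Tendsto g atBot (𝓝 l)) : IntegrableOn g' (Iic b) := by
  have hint : ∀ i, IntegrableOn g' (Ioc i b) := fun i =>
    intervalIntegral.integrableOn_deriv_of_nonneg
      (fun x hx => (hderiv x hx.2).continuousAt.continuousWithinAt)
      (fun x hx => hderiv x hx.2.le) (fun x hx => g'pos x hx.2.le)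
  refine integrableOn_Iic_of_intervalIntegral_norm_tendsto (g b - l) b hint tendsto_id
    ((tendsto_const_nhds.sub hg).congr' ?_)
  filter_upwards [eventually_le_atBot b] with i hi
  have hsub : uIcc i b ⊆ Iic b := by rw [uIcc_of_le hi]; exact Icc_subset_Iic_self
  rw [intervalIntegral.integral_congr fun x hx => Real.norm_of_nonneg (g'pos x (hsub hx)),
    intervalIntegral.integral_eq_sub_of_hasDerivAt (fun x hx => hderiv x (hsub hx))
      ((intervalIntegrable_iff_integrableOn_Ioc_of_le hi).2 (hint i))]

variable {E : Type*} [NormedAddCommGroup E] [NormedSpace ℝ E] [CompleteSpace E]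

theorem aestronglyMeasurable_restrict_of_hasDerivAt {F F' : ℝ → E} {s : Set ℝ}
    (hs : MeasurableSet s) (hF : ∀ t ∈ s, HasDerivAt F (F' t) t) :
    AEStronglyMeasurable F' (volume.restrict s) :=
  (aestronglyMeasurable_deriv F _).congr <| (ae_restrict_mem hs).mono fun t ht => (hF t ht).deriv

theorem exists_tendsto_atBot_norm_sub_le_integral {F F' : ℝ → E} {x₀ : ℝ}
    (hF : ∀ t ≤ x₀, HasDerivAt F (F' t) t) (hF' : IntegrableOn F' (Iic x₀)) :
    ∃ L, Tendsto F atBot (𝓝 L) ∧ ∀ x ≤ x₀, ‖F x - L‖ ≤ ∫ t in Iic x, ‖F' t‖ := by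
  have hL := tendsto_limUnder_of_hasDerivAt_of_integrableOn_Iic hF hF'
  refine ⟨_, hL, fun x hx => ?_⟩
  rw [← integral_Iic_of_hasDerivAt_of_tendsto' (fun t ht => hF t (le_trans ht hx))
    (hF'.mono_set (Iic_subset_Iic.2 hx)) hL]
  exact norm_integral_le_integral_norm F'

end Improper

theorem integrable_and_integral_abs_le_of_weighted_sq {α : Type*} [MeasurableSpace α]
    {μ : Measure α} {w g : α → ℝ} (hw_pos : ∀ᵐ x ∂μ, 0 < w x) (hw : Integrable w μ)
    (hg : AEStronglyMeasurable g μ) (hwg : Integrable (fun x => (w x)⁻¹ * g x ^ 2) μ) :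
    Integrable g μ ∧ ∫ x, |g x| ∂μ ≤ √(∫ x, w x ∂μ) * √(∫ x, (w x)⁻¹ * g x ^ 2 ∂μ) := by
  set u : α → ℝ := fun x => √(w x)
  set v : α → ℝ := fun x => √(w x)⁻¹ * |g x|
  have hu_sq : (fun x => u x ^ 2) =ᵐ[μ] w := by
    filter_upwards [hw_pos] with x hx using Real.sq_sqrt hx.le
  have hv_sq : (fun x => v x ^ 2) =ᵐ[μ] fun x => (w x)⁻¹ * g x ^ 2 := by
    filter_upwards [hw_pos] with x hx
    rw [mul_pow, Real.sq_sqrt (inv_nonneg.2 hx.le), sq_abs]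
  have huv : (fun x => u x * v x) =ᵐ[μ] fun x => |g x| := by
    filter_upwards [hw_pos] with x hx
    rw [← mul_assoc, ← Real.sqrt_mul hx.le, mul_inv_cancel₀ hx.ne', Real.sqrt_one, one_mul]
  have hu : MemLp u 2 μ :=
    (memLp_two_iff_integrable_sq (Real.continuous_sqrt.comp_aestronglyMeasurable
      hw.aestronglyMeasurable)).2 (hw.congr hu_sq.symm)
  have hv : MemLp v 2 μ :=
    (memLp_two_iff_integrable_sq ((Real.continuous_sqrt.comp_aestronglyMeasurable
      hw.aemeasurable.inv.aestronglyMeasurable).mul hg.norm)).2 (hwg.congr hv_sq.symm)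
  have habs : Integrable (fun x => |g x|) μ := (hu.integrable_mul hv).congr huv
  refine ⟨habs.mono' hg (ae_of_all _ fun x => (Real.norm_eq_abs _).le), ?_⟩
  have := integral_mul_le_Lp_mul_Lq_of_nonneg Real.HolderConjugate.two_two
    (ae_of_all _ fun x => Real.sqrt_nonneg _)
    (ae_of_all _ fun x => mul_nonneg (Real.sqrt_nonneg _) (abs_nonneg _))
    (by rwa [ENNReal.ofReal_ofNat]) (by rwa [ENNReal.ofReal_ofNat])
  simp only [Real.rpow_two, ← Real.sqrt_eq_rpow] at this
  rwa [integral_congr_ae huv, integral_congr_ae hu_sq, integral_congr_ae hv_sq] at this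

section Kerr

variable {M a : ℝ}

theorem M_mem_Ioo_rMinus_rPlus (h : a ^ 2 < M ^ 2) : M ∈ Ioo (rMinus M a) (rPlus M a) := by
  have := Real.sqrt_pos.2 (sub_pos.2 h)
  constructor <;> simp only [rMinus, rPlus] <;> linarith

theorem kerrDelta_eq_mul (h : a ^ 2 ≤ M ^ 2) (r : ℝ) :
    KerrDelta M a r = (r - rMinus M a) * (r - rPlus M a) := by
  have := Real.sq_sqrt (sub_nonneg.2 h)
  simp only [KerrDelta, rMinus, rPlus]
  linear_combination this

theorem kerrDelta_neg (h : a ^ 2 ≤ M ^ 2) {r : ℝ} (hr : r ∈ Ioo (rMinus M a) (rPlus M a)) :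
    KerrDelta M a r < 0 := by
  rw [kerrDelta_eq_mul h]
  exact mul_neg_of_pos_of_neg (sub_pos.2 hr.1) (sub_neg.2 hr.2)

theorem sq_add_sq_pos_of_kerrDelta_neg {r : ℝ} (hr : KerrDelta M a r < 0) : 0 < r ^ 2 + a ^ 2 := by
  by_contra! h0
  obtain rfl : r = 0 :=
    pow_eq_zero_iff two_ne_zero |>.1 (le_antisymm (by nlinarith [sq_nonneg a]) (sq_nonneg r))
  simp only [KerrDelta] at hr
  nlinarith [sq_nonneg a]

theorem kerrMu_neg (h : a ^ 2 ≤ M ^ 2) {r : ℝ} (hr : r ∈ Ioo (rMinus M a) (rPlus M a)) :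
    kerrMu M a r < 0 :=
  have hΔ := kerrDelta_neg h hr
  div_neg_of_neg_of_pos hΔ (sq_add_sq_pos_of_kerrDelta_neg hΔ)

theorem hasDerivAt_rStar (h : a ^ 2 < M ^ 2) {r : ℝ} (hr : r ∈ Ioo (rMinus M a) (rPlus M a)) :
    HasDerivAt (rStar M a) ((r ^ 2 + a ^ 2) / KerrDelta M a r) r := by
  have hcont : ContinuousOn (fun s => (s ^ 2 + a ^ 2) / KerrDelta M a s)
      (Ioo (rMinus M a) (rPlus M a)) :=
    ContinuousOn.div (by fun_prop) (by unfold KerrDelta; fun_prop)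
      fun s hs => (kerrDelta_neg h.le hs).ne
  exact intervalIntegral.integral_hasDerivAt_right
    (hcont.mono (ordConnected_Ioo.uIcc_subset (M_mem_Ioo_rMinus_rPlus h) hr)).intervalIntegrable
    (hcont.stronglyMeasurableAtFilter isOpen_Ioo r hr) (hcont.continuousAt (isOpen_Ioo.mem_nhds hr))

theorem strictAntiOn_rStar (h : a ^ 2 < M ^ 2) :
    StrictAntiOn (rStar M a) (Ioo (rMinus M a) (rPlus M a)) :=
  strictAntiOn_of_hasDerivWithinAt_neg (convex_Ioo _ _)
    (fun _ hr => (hasDerivAt_rStar h hr).continuousAt.continuousWithinAt)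
    (fun _ hr => (hasDerivAt_rStar h (interior_subset hr)).hasDerivWithinAt)
    fun _ hr => have hΔ := kerrDelta_neg h.le (interior_subset hr)
      div_neg_of_pos_of_neg (sq_add_sq_pos_of_kerrDelta_neg hΔ) hΔ

end Kerr

section TortoiseInverse

variable {M a : ℝ} {ρ : ℝ → ℝ}

theorem strictAntiOn_two_mul_rStar (h : a ^ 2 < M ^ 2) :
    StrictAntiOn (fun r => 2 * rStar M a r) (Ioo (rMinus M a) (rPlus M a)) :=
  (strictMono_mul_left_of_pos two_pos).comp_strictAntiOn (strictAntiOn_rStar h)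

theorem range_eq_Ioo_of_rStar_inv (h : a ^ 2 < M ^ 2)
    (hρ : ∀ x, ρ x ∈ Ioo (rMinus M a) (rPlus M a)) (hρinv : ∀ x, 2 * rStar M a (ρ x) = x) :
    range ρ = Ioo (rMinus M a) (rPlus M a) :=
  (strictAntiOn_two_mul_rStar h).injOn.range_eq_of_rightInverse hρ hρinv

theorem antitone_of_rStar_inv (h : a ^ 2 < M ^ 2)
    (hρ : ∀ x, ρ x ∈ Ioo (rMinus M a) (rPlus M a)) (hρinv : ∀ x, 2 * rStar M a (ρ x) = x) :
    Antitone ρ :=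
  (strictAntiOn_two_mul_rStar h).antitone_of_rightInverse hρ hρinv

theorem tendsto_atBot_of_rStar_inv (h : a ^ 2 < M ^ 2)
    (hρ : ∀ x, ρ x ∈ Ioo (rMinus M a) (rPlus M a)) (hρinv : ∀ x, 2 * rStar M a (ρ x) = x) :
    Tendsto ρ atBot (𝓝 (rPlus M a)) := by
  refine tendsto_atBot_isLUB (antitone_of_rStar_inv h hρ hρinv) ?_
  rw [range_eq_Ioo_of_rStar_inv h hρ hρinv]
  exact isLUB_Ioo ((M_mem_Ioo_rMinus_rPlus h).1.trans (M_mem_Ioo_rMinus_rPlus h).2)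

theorem hasDerivAt_of_rStar_inv (h : a ^ 2 < M ^ 2)
    (hρ : ∀ x, ρ x ∈ Ioo (rMinus M a) (rPlus M a)) (hρinv : ∀ x, 2 * rStar M a (ρ x) = x)
    (t : ℝ) : HasDerivAt ρ (kerrMu M a (ρ t) / 2) t := by
  have hcont : Continuous ρ := (antitone_of_rStar_inv h hρ hρinv).continuous_of_isOpen_range
    (by rw [range_eq_Ioo_of_rStar_inv h hρ hρinv]; exact isOpen_Ioo)
  have hΔ := kerrDelta_neg h.le (hρ t)
  have hpos := sq_add_sq_pos_of_kerrDelta_neg hΔ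
  have hT' : 2 * ((ρ t ^ 2 + a ^ 2) / KerrDelta M a (ρ t)) ≠ 0 :=
    mul_ne_zero two_ne_zero (div_ne_zero hpos.ne' hΔ.ne)
  refine (((hasDerivAt_rStar h (hρ t)).const_mul 2).of_local_left_inverse hcont.continuousAt
    hT' (Eventually.of_forall hρinv)).congr_deriv ?_
  simp only [kerrMu]
  field_simp

theorem integral_Iic_neg_kerrMu_comp (h : a ^ 2 < M ^ 2)
    (hρ : ∀ x, ρ x ∈ Ioo (rMinus M a) (rPlus M a)) (hρinv : ∀ x, 2 * rStar M a (ρ x) = x)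
    (x : ℝ) : IntegrableOn (fun t => -kerrMu M a (ρ t)) (Iic x) ∧
      ∫ t in Iic x, -kerrMu M a (ρ t) = 2 * (rPlus M a - ρ x) := by
  have hderiv : ∀ t, HasDerivAt (fun t => -2 * ρ t) (-kerrMu M a (ρ t)) t := fun t =>
    ((hasDerivAt_of_rStar_inv h hρ hρinv t).const_mul (-2)).congr_deriv (by ring)
  have hlim : Tendsto (fun t => -2 * ρ t) atBot (𝓝 (-2 * rPlus M a)) :=
    (tendsto_atBot_of_rStar_inv h hρ hρinv).const_mul (-2)
  have hint := integrableOn_Iic_deriv_of_nonneg (b := x) (fun t _ => hderiv t)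
    (fun t _ => neg_nonneg.2 (kerrMu_neg h.le (hρ t)).le) hlim
  refine ⟨hint, ?_⟩
  rw [integral_Iic_of_hasDerivAt_of_tendsto' (fun t _ => hderiv t) hint hlim]
  ring

end TortoiseInverse

theorem energy_to_pointwise_bound_general (M a : ℝ) (haM : |a| < M)
    (ρ : ℝ → ℝ) (hρmem : ∀ x : ℝ, ρ x ∈ Set.Ioo (rMinus M a) (rPlus M a))
    (hρinv : ∀ x : ℝ, 2 * rStar M a (ρ x) = x)
    (x₀ E : ℝ) (hE : 0 ≤ E) (F F' : ℝ → ℝ)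
    (hF : ∀ t : ℝ, t ≤ x₀ → HasDerivAt F (F' t) t)
    (hInt : IntegrableOn (fun t => (-kerrMu M a (ρ t))⁻¹ * F' t ^ 2) (Set.Iic x₀))
    (hbound : (∫ t in Set.Iic x₀, (-kerrMu M a (ρ t))⁻¹ * F' t ^ 2) ≤ E ^ 2) :
    ∃ L : ℝ, Filter.Tendsto F Filter.atBot (nhds L) ∧
      ∀ x : ℝ, x ≤ x₀ → |F x - L| ≤ Real.sqrt (2 * (rPlus M a - ρ x)) * E := by
  have h : a ^ 2 < M ^ 2 := sq_lt_sq' (abs_lt.1 haM).1 (abs_lt.1 haM).2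
  have hw_pos t : 0 < -kerrMu M a (ρ t) := neg_pos.2 (kerrMu_neg h.le (hρmem t))
  have hweight := integral_Iic_neg_kerrMu_comp h hρmem hρinv
  have hCS x (hx : x ≤ x₀) := integrable_and_integral_abs_le_of_weighted_sq
    (ae_of_all _ fun t => hw_pos t) (hweight x).1
    (aestronglyMeasurable_restrict_of_hasDerivAt measurableSet_Iic fun t ht =>
      hF t (le_trans ht hx))
    (hInt.mono_set (Iic_subset_Iic.2 hx))
  obtain ⟨L, hL, hFL⟩ := exists_tendsto_atBot_norm_sub_le_integral hF (hCS x₀ le_rfl).1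
  refine ⟨L, hL, fun x hx => ?_⟩
  have hEx : ∫ t in Iic x, (-kerrMu M a (ρ t))⁻¹ * F' t ^ 2 ≤ E ^ 2 :=
    (setIntegral_mono_set hInt (ae_of_all _ fun t => by have := hw_pos t; positivity)
      (Iic_subset_Iic.2 hx).eventuallyLE).trans hbound
  calc |F x - L| ≤ ∫ t in Iic x, |F' t| := hFL x hx
    _ ≤ _ := (hCS x hx).2
    _ ≤ √(2 * (rPlus M a - ρ x)) * E := by
      rw [(hweight x).2]
      gcongr
      exact Real.sqrt_le_iff.2 ⟨hE, hEx⟩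

/-- Cauchy–Schwarz estimate: a weighted energy bound `∫_{−∞}^{x₀} (−μ∘ρ)^{-1} (F')² ≤ E²`
on the derivative along a constant-`ū` curve yields the existence of the limit of `F`
at `−∞` and the pointwise bound `|F(x) − L| ≤ (2(r₊ − ρ(x)))^{1/2} E`. -/
theorem energy_to_pointwise_bound (M a : ℝ) (ha : 0 < |a|) (haM : |a| < M)
    (ρ : ℝ → ℝ) (hρmem : ∀ x : ℝ, ρ x ∈ Set.Ioo (rMinus M a) (rPlus M a))
    (hρinv : ∀ x : ℝ, 2 * rStar M a (ρ x) = x)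
    (x₀ E : ℝ) (hE : 0 ≤ E) (F F' : ℝ → ℝ)
    (hF : ∀ t : ℝ, t ≤ x₀ → HasDerivAt F (F' t) t)
    (hInt : IntegrableOn (fun t => (-kerrMu M a (ρ t))⁻¹ * F' t ^ 2) (Set.Iic x₀))
    (hbound : (∫ t in Set.Iic x₀, (-kerrMu M a (ρ t))⁻¹ * F' t ^ 2) ≤ E ^ 2) :
    ∃ L : ℝ, Filter.Tendsto F Filter.atBot (nhds L) ∧
      ∀ x : ℝ, x ≤ x₀ → |F x - L| ≤ Real.sqrt (2 * (rPlus M a - ρ x)) * E :=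
  energy_to_pointwise_bound_general M a haM ρ hρmem hρinv x₀ E hE F F' hF hInt hbound
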